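/- arXiv:1512.08344 — 2 statements merged into one kernel-verified Lean document; each statement's English description precedes it below -/
import Mathlib

section
/- Let G1 be a connected δ1-regular graph on n vertices and G2 be a connected δ2-regular graph on δ1 vertices, and write λi = λ(Gi) for i = 1,2. Then min{λ1, λ2} ≤ λ(G1®G2) ≤ min{λ1, δ2+1}. -/
open SimpleGraph

section Defs

variable {V : Type*}

/-- The set of edges of `G` with one endpoint in `X` and the other outside `X`. -/
def edgeBoundary (G : SimpleGraph V) (X : Set V) : Set (Sym2 V) :=
  {e | e ∈ G.edgeSet ∧ ∃ u ∈ X, ∃ v ∈ Xᶜ, e = s(u, v)}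

/-- The edge-connectivity `λ(G)`: the minimum number of edges whose removal disconnects `G`. -/
noncomputable def edgeConn (G : SimpleGraph V) : ℕ :=
  sInf {k | ∃ F : Set (Sym2 V), F ⊆ G.edgeSet ∧ F.ncard = k ∧ ¬(G.deleteEdges F).Connected}

/-- `F` is a restricted edge-cut of `G`: removing `F` disconnects `G` and leaves no
isolated vertices. -/
def IsRestrictedEdgeCut (G : SimpleGraph V) (F : Set (Sym2 V)) : Prop :=
  F ⊆ G.edgeSet ∧ ¬(G.deleteEdges F).Connected ∧ ∀ v : V, ∃ w : V, (G.deleteEdges F).Adj v w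

/-- The restricted edge-connectivity `λ'(G)`. -/
noncomputable def restrictedEdgeConn (G : SimpleGraph V) : ℕ :=
  sInf {k | ∃ F : Set (Sym2 V), IsRestrictedEdgeCut G F ∧ F.ncard = k}

/-- The vertex-connectivity `κ(G)`: the minimum size of a set of vertices whose removal
leaves a disconnected graph or a graph with at most one vertex. -/
noncomputable def vertexConn (G : SimpleGraph V) : ℕ :=
  sInf {k | ∃ S : Set V, S.ncard = k ∧
    (¬(G.induce (Sᶜ : Set V)).Connected ∨ (Sᶜ : Set V).ncard ≤ 1)}

/-- The minimum edge-degree `ξ(G) = min {d(u) + d(v) - 2 : uv ∈ E(G)}`. -/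
noncomputable def minEdgeDegree (G : SimpleGraph V) : ℕ :=
  sInf {k | ∃ u v : V, G.Adj u v ∧ (G.neighborSet u).ncard + (G.neighborSet v).ncard - 2 = k}

/-- `G` is `λ'`-optimal if `λ'(G) = ξ(G)`. -/
def LambdaPrimeOptimal (G : SimpleGraph V) : Prop :=
  restrictedEdgeConn G = minEdgeDegree G

/-- The replacement product of `G1` and `G2` with respect to an edge-labelling `ℓ`,
where `ℓ x i` is the other endpoint of the edge of `G1` labelled `i` at the vertex `x`.
Vertices `(x, i)` and `(y, j)` are adjacent iff either `x = y` and `i j ∈ E(G2)`, or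
`x y ∈ E(G1)` and the edge `x y` is labelled `i` at `x` and `j` at `y`. -/
def replacementProduct {V1 V2 : Type*} (G1 : SimpleGraph V1) (G2 : SimpleGraph V2)
    (ℓ : V1 → V2 → V1) : SimpleGraph (V1 × V2) where
  Adj p q := (p.1 = q.1 ∧ G2.Adj p.2 q.2) ∨
    (G1.Adj p.1 q.1 ∧ ℓ p.1 p.2 = q.1 ∧ ℓ q.1 q.2 = p.1)
  symm := by
    constructor
    rintro p q (⟨h1, h2⟩ | ⟨h1, h2, h3⟩)
    · exact Or.inl ⟨h1.symm, h2.symm⟩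
    · exact Or.inr ⟨h1.symm, h3, h2⟩
  loopless := by
    constructor
    rintro p (⟨_, h⟩ | ⟨h, _⟩)
    · exact G2.loopless.irrefl _ h
    · exact G1.loopless.irrefl _ h

/-- `ℓ` is a valid edge-labelling of `G1` for the replacement product:
for each vertex `x`, `ℓ x` is injective and `ℓ x i` is always a neighbour of `x`
(hence `ℓ x` enumerates the neighbours of `x` when `G1` is `|V2|`-regular). -/
def IsRPLabelling {V1 V2 : Type*} (G1 : SimpleGraph V1) (ℓ : V1 → V2 → V1) : Prop :=
  (∀ x, Function.Injective (ℓ x)) ∧ ∀ x i, G1.Adj x (ℓ x i)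

end Defs

/-! Every vertex `(x, i)` of `G1 ® G2` has the `δ2` neighbours `(x, j)` in its cloud and one
neighbour outside it, and deleting its edges isolates it. Lifting each edge of a cut of `G1` to
the unique product edge between the two clouds it joins gives a cut of the product of the same
size. For the lower bound take a minimum cut `F` of the product. If `F` splits some cloud
`{x} × V2`, the edges of `F` inside that cloud form a cut of `G2`. Otherwise every cloud stays
connected, so the projections of the edges of `F` between clouds must form a cut of `G1`. -/

namespace SimpleGraph

variable {V W : Type*}

lemma Reachable.of_adj_reachable {G : SimpleGraph V} {H : SimpleGraph W} (f : V → W)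
    (hf : ∀ u v, G.Adj u v → H.Reachable (f u) (f v)) {u v : V} (h : G.Reachable u v) :
    H.Reachable (f u) (f v) := by
  rw [reachable_iff_reflTransGen] at h ⊢
  exact Relation.ReflTransGen.lift' f (fun a b hab => (reachable_iff_reflTransGen _ _).1
    (hf a b hab)) _ _ h

lemma Preconnected.of_surjective_of_adj_reachable {G : SimpleGraph V} {H : SimpleGraph W}
    {f : V → W} (hsurj : Function.Surjective f)
    (hf : ∀ u v, G.Adj u v → H.Reachable (f u) (f v)) (hG : G.Preconnected) :
    H.Preconnected := by
  intro a b
  obtain ⟨u, rfl⟩ := hsurj a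
  obtain ⟨v, rfl⟩ := hsurj b
  exact (hG u v).of_adj_reachable f hf

end SimpleGraph

open SimpleGraph

section EdgeConn

variable {V : Type*} {G : SimpleGraph V}

lemma edgeConn_le_ncard {F : Set (Sym2 V)} (hF : F ⊆ G.edgeSet)
    (hdis : ¬(G.deleteEdges F).Connected) : edgeConn G ≤ F.ncard :=
  Nat.sInf_le ⟨F, hF, rfl, hdis⟩

variable [Nontrivial V]

lemma exists_ncard_eq_edgeConn (G : SimpleGraph V) :
    ∃ F ⊆ G.edgeSet, ¬(G.deleteEdges F).Connected ∧ F.ncard = edgeConn G := by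
  have hall : ¬(G.deleteEdges G.edgeSet).Connected := by
    rw [deleteEdges_edgeSet, sdiff_self]
    exact fun h => not_preconnected_bot h.preconnected
  obtain ⟨F, hF, hcard, hdis⟩ : edgeConn G ∈ {k | ∃ F : Set (Sym2 V), F ⊆ G.edgeSet ∧
      F.ncard = k ∧ ¬(G.deleteEdges F).Connected} :=
    Nat.sInf_mem ⟨_, G.edgeSet, subset_rfl, rfl, hall⟩
  exact ⟨F, hF, hdis, hcard⟩

lemma edgeConn_le_ncard_neighborSet (G : SimpleGraph V) (v : V) :
    edgeConn G ≤ (G.neighborSet v).ncard := by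
  classical
  have hdis : ¬(G.deleteEdges (G.incidenceSet v)).Connected := by
    intro hcon
    obtain ⟨w, hw⟩ := exists_ne v
    obtain ⟨p⟩ := hcon.preconnected v w
    cases p with
    | nil => exact hw rfl
    | cons hadj _ =>
      rw [deleteEdges_adj] at hadj
      exact hadj.2 (G.mk'_mem_incidenceSet_left_iff.2 hadj.1)
  calc edgeConn G ≤ (G.incidenceSet v).ncard := edgeConn_le_ncard (G.incidenceSet_subset v) hdis
    _ = (G.neighborSet v).ncard := Set.ncard_congr' (G.incidenceSetEquivNeighborSet v)

end EdgeConn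

lemma IsRPLabelling.exists_apply_eq_of_adj {V1 V2 : Type*} [Finite V1] {G1 : SimpleGraph V1}
    {ℓ : V1 → V2 → V1} (hℓ : IsRPLabelling G1 ℓ)
    (hreg : ∀ x, (G1.neighborSet x).ncard = Nat.card V2) {x y : V1} (h : G1.Adj x y) :
    ∃ i, ℓ x i = y := by
  have hrange : Set.range (ℓ x) = G1.neighborSet x :=
    Set.eq_of_subset_of_ncard_le (Set.range_subset_iff.2 (hℓ.2 x))
      (by rw [hreg, Set.ncard_range_of_injective (hℓ.1 x)])
  rw [← Set.mem_range, hrange]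
  exact h

namespace replacementProduct

variable {V1 V2 : Type*} {G1 : SimpleGraph V1} {G2 : SimpleGraph V2} {ℓ : V1 → V2 → V1}

lemma fst_eq_or_adj {p q : V1 × V2} (h : (replacementProduct G1 G2 ℓ).Adj p q) :
    p.1 = q.1 ∨ G1.Adj p.1 q.1 :=
  h.imp And.left And.left

lemma eq_of_adj_of_fst_eq (hinj : ∀ x, Function.Injective (ℓ x)) {p q p' q' : V1 × V2}
    (h : (replacementProduct G1 G2 ℓ).Adj p q) (h' : (replacementProduct G1 G2 ℓ).Adj p' q')
    (hne : p.1 ≠ q.1) (hp : p.1 = p'.1) (hq : q.1 = q'.1) : p = p' := by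
  obtain ⟨hpq, -⟩ | ⟨-, hlab, -⟩ := h
  · exact absurd hpq hne
  obtain ⟨hpq', -⟩ | ⟨-, hlab', -⟩ := h'
  · exact absurd (hp.trans (hpq'.trans hq.symm)) hne
  exact Prod.ext hp (hinj p.1 (by rw [hlab, hq, hp, hlab']))

lemma injOn_map_fst (hinj : ∀ x, Function.Injective (ℓ x)) :
    Set.InjOn (Sym2.map Prod.fst)
      ((replacementProduct G1 G2 ℓ).edgeSet ∩ Sym2.map Prod.fst ⁻¹' G1.edgeSet) := by
  rintro e ⟨he, he1⟩ e' ⟨he', -⟩ hmap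
  induction e using Sym2.ind with | _ p q =>
  induction e' using Sym2.ind with | _ p' q' =>
  have hne : p.1 ≠ q.1 := (G1.mem_edgeSet.1 he1).ne
  rw [mem_edgeSet] at he he'
  rw [Sym2.map_mk, Sym2.map_mk, Sym2.eq_iff] at hmap
  rcases hmap with ⟨hp, hq⟩ | ⟨hp, hq⟩
  · rw [eq_of_adj_of_fst_eq hinj he he' hne hp hq, eq_of_adj_of_fst_eq hinj he.symm he'.symm hne.symm hq hp]
  · rw [eq_of_adj_of_fst_eq hinj he he'.symm hne hp hq, eq_of_adj_of_fst_eq hinj he.symm he' hne.symm hq hp,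
      Sym2.eq_swap]

lemma ncard_neighborSet_le [Finite V1] [Finite V2] (hinj : ∀ x, Function.Injective (ℓ x))
    (x : V1) (i : V2) :
    ((replacementProduct G1 G2 ℓ).neighborSet (x, i)).ncard ≤ (G2.neighborSet i).ncard + 1 := by
  set cross := {q : V1 × V2 | q.1 = ℓ x i ∧ ℓ q.1 q.2 = x}
  have hsub : (replacementProduct G1 G2 ℓ).neighborSet (x, i) ⊆
      Prod.mk x '' G2.neighborSet i ∪ cross := by
    rintro ⟨y, j⟩ (⟨rfl, hij⟩ | ⟨-, hy, hj⟩)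
    · exact Or.inl ⟨j, hij, rfl⟩
    · exact Or.inr ⟨hy.symm, hj⟩
  have hcross : cross.Subsingleton := by
    rintro ⟨y, j⟩ ⟨rfl, hj⟩ ⟨y', j'⟩ ⟨rfl, hj'⟩
    exact Prod.ext rfl (hinj _ (hj.trans hj'.symm))
  calc _ ≤ (Prod.mk x '' G2.neighborSet i ∪ cross).ncard := Set.ncard_le_ncard hsub
    _ ≤ (Prod.mk x '' G2.neighborSet i).ncard + cross.ncard := Set.ncard_union_le _ _
    _ ≤ (G2.neighborSet i).ncard + 1 :=
        add_le_add Set.ncard_image_le (Set.ncard_le_one_iff_subsingleton.2 hcross)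

variable [Finite V1]

lemma edgeConn_le_ncard_neighborSet_add_one [Finite V2] [Nontrivial V1]
    (hinj : ∀ x, Function.Injective (ℓ x)) (i : V2) :
    edgeConn (replacementProduct G1 G2 ℓ) ≤ (G2.neighborSet i).ncard + 1 := by
  have : Nonempty V2 := ⟨i⟩
  obtain ⟨x, -⟩ := exists_pair_ne V1
  exact (edgeConn_le_ncard_neighborSet _ (x, i)).trans (ncard_neighborSet_le hinj x i)

lemma edgeConn_le_edgeConn_left [Nontrivial V1] [Nonempty V2]
    (hinj : ∀ x, Function.Injective (ℓ x)) :
    edgeConn (replacementProduct G1 G2 ℓ) ≤ edgeConn G1 := by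
  obtain ⟨F1, hF1, hdis1, hcard1⟩ := exists_ncard_eq_edgeConn G1
  set F := (replacementProduct G1 G2 ℓ).edgeSet ∩ Sym2.map Prod.fst ⁻¹' F1
  have hproj : ∀ p q, ((replacementProduct G1 G2 ℓ).deleteEdges F).Adj p q →
      (G1.deleteEdges F1).Reachable p.1 q.1 := by
    intro p q hpq
    rw [deleteEdges_adj] at hpq
    obtain h | h := fst_eq_or_adj hpq.1
    · rw [h]
    · refine Adj.reachable ((deleteEdges_adj ..).2 ⟨h, fun hm => hpq.2 ⟨hpq.1, ?_⟩⟩)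
      rwa [Set.mem_preimage, Sym2.map_mk]
  have hdis : ¬((replacementProduct G1 G2 ℓ).deleteEdges F).Connected := fun hcon =>
    hdis1 ((connected_iff _).2 ⟨hcon.preconnected.of_surjective_of_adj_reachable
      Prod.fst_surjective hproj, inferInstance⟩)
  have hinjOn : Set.InjOn (Sym2.map Prod.fst) F :=
    (injOn_map_fst hinj).mono (Set.inter_subset_inter_right _ (Set.preimage_mono hF1))
  calc _ ≤ F.ncard := edgeConn_le_ncard Set.inter_subset_left hdis
    _ ≤ F1.ncard := Set.ncard_le_ncard_of_injOn _ (fun _ he => he.2) hinjOn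
    _ = edgeConn G1 := hcard1

lemma edgeConn_left_le_ncard [Finite V2] [Nonempty V2]
    (hsurj : ∀ x y, G1.Adj x y → ∃ i, ℓ x i = y) {F : Set (Sym2 (V1 × V2))}
    (hdis : ¬((replacementProduct G1 G2 ℓ).deleteEdges F).Connected)
    (hcloud : ∀ x i j, ((replacementProduct G1 G2 ℓ).deleteEdges F).Reachable (x, i) (x, j)) :
    edgeConn G1 ≤ F.ncard := by
  set F1 := G1.edgeSet ∩ Sym2.map Prod.fst '' F
  have hlift : ∀ (i : V2) a b, (G1.deleteEdges F1).Adj a b →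
      ((replacementProduct G1 G2 ℓ).deleteEdges F).Reachable (a, i) (b, i) := by
    intro i a b h
    obtain ⟨hab, hnot⟩ := (deleteEdges_adj ..).1 h
    obtain ⟨i', hi'⟩ := hsurj a b hab
    obtain ⟨j', hj'⟩ := hsurj b a hab.symm
    have hcross : ((replacementProduct G1 G2 ℓ).deleteEdges F).Adj (a, i') (b, j') :=
      (deleteEdges_adj ..).2
        ⟨Or.inr ⟨hab, hi', hj'⟩, fun hm => hnot ⟨hab, _, hm, Sym2.map_mk ..⟩⟩
    exact (hcloud a i i').trans (hcross.reachable.trans (hcloud b j' i))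
  have hdis1 : ¬(G1.deleteEdges F1).Connected := by
    intro hcon
    have : Nonempty V1 := hcon.nonempty
    refine hdis ((connected_iff _).2 ⟨fun p q => ?_, inferInstance⟩)
    exact ((hcon.preconnected p.1 q.1).of_adj_reachable (·, p.2) (hlift p.2)).trans
      (hcloud q.1 p.2 q.2)
  calc edgeConn G1 ≤ F1.ncard := edgeConn_le_ncard Set.inter_subset_left hdis1
    _ ≤ (Sym2.map Prod.fst '' F).ncard := Set.ncard_le_ncard Set.inter_subset_right
    _ ≤ F.ncard := Set.ncard_image_le

lemma edgeConn_right_le_ncard [Finite V2] {F : Set (Sym2 (V1 × V2))} {x : V1} {i j : V2}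
    (hij : ¬((replacementProduct G1 G2 ℓ).deleteEdges F).Reachable (x, i) (x, j)) :
    edgeConn G2 ≤ F.ncard := by
  set F2 := G2.edgeSet ∩ Sym2.map (Prod.mk x) ⁻¹' F
  have hlift : ∀ a b, (G2.deleteEdges F2).Adj a b →
      ((replacementProduct G1 G2 ℓ).deleteEdges F).Reachable (x, a) (x, b) := by
    intro a b h
    obtain ⟨hab, hnot⟩ := (deleteEdges_adj ..).1 h
    refine Adj.reachable
      ((deleteEdges_adj ..).2 ⟨Or.inl ⟨rfl, hab⟩, fun hm => hnot ⟨hab, ?_⟩⟩)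
    rwa [Set.mem_preimage, Sym2.map_mk]
  have hdis2 : ¬(G2.deleteEdges F2).Connected := fun hcon =>
    hij ((hcon.preconnected i j).of_adj_reachable (Prod.mk x) hlift)
  calc edgeConn G2 ≤ F2.ncard := edgeConn_le_ncard Set.inter_subset_left hdis2
    _ ≤ F.ncard := Set.ncard_le_ncard_of_injOn _ (fun _ he => he.2)
      (Sym2.map.injective (Prod.mk_right_injective x)).injOn

lemma min_edgeConn_le_edgeConn [Finite V2] [Nontrivial V1] [Nonempty V2]
    (hsurj : ∀ x y, G1.Adj x y → ∃ i, ℓ x i = y) :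
    min (edgeConn G1) (edgeConn G2) ≤ edgeConn (replacementProduct G1 G2 ℓ) := by
  obtain ⟨F, -, hdis, hcard⟩ := exists_ncard_eq_edgeConn (replacementProduct G1 G2 ℓ)
  rw [← hcard]
  by_cases hcloud :
      ∀ x i j, ((replacementProduct G1 G2 ℓ).deleteEdges F).Reachable (x, i) (x, j)
  · exact min_le_of_left_le (edgeConn_left_le_ncard hsurj hdis hcloud)
  · push Not at hcloud
    obtain ⟨x, i, j, hij⟩ := hcloud
    exact min_le_of_right_le (edgeConn_right_le_ncard hij)

end replacementProduct

theorem edgeConn_replacementProduct_bounds_general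
    {V1 V2 : Type*} [Fintype V1] [Fintype V2] {δ1 δ2 : ℕ}
    (G1 : SimpleGraph V1) (G2 : SimpleGraph V2) (ℓ : V1 → V2 → V1)
    (hℓ : IsRPLabelling G1 ℓ)
    (hc1 : G1.Connected) (hc2 : G2.Connected)
    (hr1 : ∀ x : V1, (G1.neighborSet x).ncard = δ1)
    (hr2 : ∀ i : V2, (G2.neighborSet i).ncard = δ2)
    (hd : Fintype.card V2 = δ1) :
    min (edgeConn G1) (edgeConn G2) ≤ edgeConn (replacementProduct G1 G2 ℓ) ∧
    edgeConn (replacementProduct G1 G2 ℓ) ≤ min (edgeConn G1) (δ2 + 1) := by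
  have hsurj : ∀ x y, G1.Adj x y → ∃ i, ℓ x i = y := fun _ _ =>
    hℓ.exists_apply_eq_of_adj fun x => by rw [hr1, Nat.card_eq_fintype_card, hd]
  obtain ⟨x⟩ := hc1.nonempty
  obtain ⟨i⟩ := hc2.nonempty
  have : Nontrivial V1 := ⟨⟨x, ℓ x i, (hℓ.2 x i).ne⟩⟩
  have : Nonempty V2 := ⟨i⟩
  have hdeg := replacementProduct.edgeConn_le_ncard_neighborSet_add_one
    (G1 := G1) (G2 := G2) hℓ.1 i
  rw [hr2] at hdeg
  exact ⟨replacementProduct.min_edgeConn_le_edgeConn hsurj,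
    le_min (replacementProduct.edgeConn_le_edgeConn_left hℓ.1) hdeg⟩

/-- Theorem 3.1, bounds (3.1). If `G1` is a connected `δ1`-regular graph
on `n` vertices and `G2` is a connected `δ2`-regular graph on `δ1` vertices, then
`min {λ1, λ2} ≤ λ(G1 ® G2) ≤ min {λ1, δ2 + 1}`. -/
theorem edgeConn_replacementProduct_bounds
    {V1 V2 : Type*} [Fintype V1] [Fintype V2] {n δ1 δ2 : ℕ}
    (G1 : SimpleGraph V1) (G2 : SimpleGraph V2) (ℓ : V1 → V2 → V1)
    (hℓ : IsRPLabelling G1 ℓ)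
    (hc1 : G1.Connected) (hc2 : G2.Connected)
    (hr1 : ∀ x : V1, (G1.neighborSet x).ncard = δ1)
    (hr2 : ∀ i : V2, (G2.neighborSet i).ncard = δ2)
    (hn : Fintype.card V1 = n) (hd : Fintype.card V2 = δ1) :
    min (edgeConn G1) (edgeConn G2) ≤ edgeConn (replacementProduct G1 G2 ℓ) ∧
    edgeConn (replacementProduct G1 G2 ℓ) ≤ min (edgeConn G1) (δ2 + 1) :=
  edgeConn_replacementProduct_bounds_general G1 G2 ℓ hℓ hc1 hc2 hr1 hr2 hd
end

section
/- Let A and B be finite groups with generating sets S_A and S_B respectively, with |S_A| = |B| ≥ 2, let φ : B → Aut(A) be an action of B on A such that S_A equals the orbit x^B = {φ_b(x) : b ∈ B} of some x ∈ S_A, and let S = {(e_A, b) : b ∈ S_B} ∪ {(x, e_B)} ⊆ A⋊_φB. Then S generates the semidirect product A⋊_φB. Moreover, if S_B = S_B^{-1} and x = x^{-1}, then S = S^{-1} and the Cayley graph C_{A⋊_φB}(S) is a replacement product of the Cayley graphs C_A(S_A) and C_B(S_B). -/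
/-!
Conjugating `(x, 1)` by `(1, b)` gives `(φ_b(x), 1)`, so the subgroup generated by `S` contains
`A × 1`, as the orbit of `x` generates `A`, and `1 × B`. Right multiplication by `(1, b)` moves
inside the cloud `{a} × B` along `C_B(S_B)`, while right multiplication by the involution `(x, 1)`
sends `(a, b)` to `(a φ_b(x), b)`, which traverses the edge of `C_A(S_A)` carrying the label `b` at
both of its ends. Each such edge carries exactly one label because `|S_A| = |B|` makes the orbit
map `b ↦ φ_b(x)` injective.
-/

open SimpleGraph

/-- The adjacency is symmetrised; when `S = S⁻¹` its two disjuncts agree. -/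
def cayleyGraph {Γ : Type*} [Group Γ] (S : Set Γ) : SimpleGraph Γ where
  Adj x y := x ≠ y ∧ (x⁻¹ * y ∈ S ∨ y⁻¹ * x ∈ S)
  symm := by
    constructor
    rintro x y ⟨h1, h2⟩
    exact ⟨h1.symm, h2.symm⟩
  loopless := by
    constructor
    rintro x ⟨h, -⟩
    exact h rfl

section CayleyGraph

variable {Γ : Type*} [Group Γ]

theorem cayleyGraph_adj {S : Set Γ} {g h : Γ} :
    (cayleyGraph S).Adj g h ↔ g ≠ h ∧ (g⁻¹ * h ∈ S ∨ h⁻¹ * g ∈ S) :=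
  Iff.rfl

theorem cayleyGraph_union_adj {S T : Set Γ} {g h : Γ} :
    (cayleyGraph (S ∪ T)).Adj g h ↔ (cayleyGraph S).Adj g h ∨ (cayleyGraph T).Adj g h := by
  simp only [cayleyGraph_adj, Set.mem_union]
  tauto

theorem cayleyGraph_adj_mul_of_mem {S : Set Γ} {s : Γ} (hs : s ∈ S) (hs1 : s ≠ 1) (g : Γ) :
    (cayleyGraph S).Adj g (g * s) :=
  ⟨by simpa [eq_comm] using hs1, Or.inl (by simpa using hs)⟩

end CayleyGraph

theorem Function.injective_of_ncard_range_eq_card {α β : Type*} [Fintype α] {f : α → β}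
    (h : (Set.range f).ncard = Fintype.card α) : Function.Injective f := by
  rw [← Set.injOn_univ]
  apply Set.injOn_of_ncard_image_eq _ Set.finite_univ
  rwa [Set.image_univ, Set.ncard_univ, Nat.card_eq_fintype_card]

section OrbitLabelling

variable {N G : Type*} [Group N] [Group G] (φ : G →* MulAut N) (n : N)

/-- The labelling of the Cayley graph of `N` with connection set the `φ`-orbit of `n`
in which the edge `{a, a * φ g n}` carries the label `g` at `a`. -/
def orbitLabelling : N → G → N := fun a g => a * φ g n

variable {φ n}

theorem isRPLabelling_orbitLabelling {S : Set N} (hinj : Function.Injective fun g => φ g n)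
    (hn1 : n ≠ 1) (hS : ∀ g, φ g n ∈ S) :
    IsRPLabelling (cayleyGraph S) (orbitLabelling φ n) :=
  ⟨fun _ _ _ h => hinj (mul_left_cancel h),
    fun _ g => cayleyGraph_adj_mul_of_mem (hS g) (by simpa using hn1) _⟩

/-- Since `n` is an involution, the edge labelled `g` at `a` is labelled `g` at its other end
as well, and injectivity of the orbit map rules out any other label there. -/
theorem orbitLabelling_eq_and_eq_iff (hn : n⁻¹ = n) (hinj : Function.Injective fun g => φ g n)
    {a a' : N} {g g' : G} :
    orbitLabelling φ n a g = a' ∧ orbitLabelling φ n a' g' = a ↔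
      a' = orbitLabelling φ n a g ∧ g' = g := by
  simp only [orbitLabelling]
  constructor
  · rintro ⟨rfl, h⟩
    refine ⟨rfl, hinj ?_⟩
    have hone : φ g n * φ g' n = 1 := mul_left_cancel (a := a) (by rw [← mul_assoc, h, mul_one])
    calc φ g' n = (φ g n)⁻¹ := eq_inv_of_mul_eq_one_right hone
      _ = φ g n := by rw [← map_inv, hn]
  · rintro ⟨rfl, rfl⟩
    refine ⟨rfl, ?_⟩
    rw [mul_assoc, ← map_mul, mul_eq_one_iff_eq_inv.mpr hn.symm, map_one, mul_one]

end OrbitLabelling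

namespace SemidirectProduct

variable {N G : Type*} [Group N] [Group G] {φ : G →* MulAut N}

theorem closure_image_inr_union_inl_eq_top {T : Set G} (hT : Subgroup.closure T = ⊤) {n : N}
    (hn : Subgroup.closure (Set.range fun g => φ g n) = ⊤) :
    Subgroup.closure (inr '' T ∪ {inl n}) = (⊤ : Subgroup (N ⋊[φ] G)) := by
  set H := Subgroup.closure (inr '' T ∪ {inl n})
  have hinr : (⊤ : Subgroup G).map inr ≤ H := by
    rw [← hT, MonoidHom.map_closure]
    exact Subgroup.closure_mono Set.subset_union_left
  have hinl : (⊤ : Subgroup N).map inl ≤ H := by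
    rw [← hn, MonoidHom.map_closure, Subgroup.closure_le]
    rintro _ ⟨_, ⟨g, rfl⟩, rfl⟩
    rw [inl_aut]
    exact mul_mem (mul_mem (hinr ⟨g, trivial, rfl⟩)
      (Subgroup.subset_closure (Or.inr rfl))) (hinr ⟨g⁻¹, trivial, rfl⟩)
  rw [Subgroup.eq_top_iff']
  intro p
  rw [← inl_left_mul_inr_right p]
  exact mul_mem (hinl ⟨p.left, trivial, rfl⟩) (hinr ⟨p.right, trivial, rfl⟩)

theorem inv_mul_mem_image_inr_iff {T : Set G} {p q : N ⋊[φ] G} :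
    p⁻¹ * q ∈ inr '' T ↔ q.left = p.left ∧ p.right⁻¹ * q.right ∈ T := by
  simp_rw [Set.mem_image, eq_comm (b := p⁻¹ * q), inv_mul_eq_iff_eq_mul]
  constructor
  · rintro ⟨g, hg, rfl⟩
    simpa using hg
  · rintro ⟨h1, h2⟩
    exact ⟨_, h2, by ext <;> simp [h1]⟩

theorem inv_mul_eq_inl_iff {p q : N ⋊[φ] G} {a : N} :
    p⁻¹ * q = inl a ↔ q.left = p.left * φ p.right a ∧ q.right = p.right := by
  rw [inv_mul_eq_iff_eq_mul, SemidirectProduct.ext_iff]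
  simp

theorem cayleyGraph_image_inr_adj {T : Set G} {p q : N ⋊[φ] G} :
    (cayleyGraph (inr '' T)).Adj p q ↔ p.left = q.left ∧ (cayleyGraph T).Adj p.right q.right := by
  simp only [cayleyGraph_adj, inv_mul_mem_image_inr_iff, ne_eq, SemidirectProduct.ext_iff]
  grind

theorem cayleyGraph_singleton_inl_adj {S : Set N} {n : N} (hn : n⁻¹ = n)
    (hinj : Function.Injective fun g => φ g n) (hS : ∀ g, φ g n ∈ S) {p q : N ⋊[φ] G} :
    (cayleyGraph {inl n}).Adj p q ↔ (cayleyGraph S).Adj p.left q.left ∧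
      orbitLabelling φ n p.left p.right = q.left ∧ orbitLabelling φ n q.left q.right = p.left := by
  have hsymm : p⁻¹ * q = inl n ↔ q⁻¹ * p = inl n := by
    rw [← inv_inj, mul_inv_rev, inv_inv, ← map_inv, hn]
  rw [orbitLabelling_eq_and_eq_iff hn hinj]
  simp only [cayleyGraph_adj, Set.mem_singleton_iff, ← hsymm, or_self, inv_mul_eq_inl_iff,
    orbitLabelling]
  constructor
  · rintro ⟨hne, hleft, hright⟩
    refine ⟨⟨fun h => hne (SemidirectProduct.ext h hright.symm), Or.inl ?_⟩, hleft, hright⟩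
    simpa [hleft] using hS p.right
  · rintro ⟨⟨hne, -⟩, h⟩
    exact ⟨fun h' => hne (congrArg left h'), h⟩

def cayleyGraphIsoReplacementProduct {S : Set N} {T : Set G} {n : N} (hn : n⁻¹ = n)
    (hinj : Function.Injective fun g => φ g n) (hS : ∀ g, φ g n ∈ S) :
    cayleyGraph (inr '' T ∪ {inl n} : Set (N ⋊[φ] G)) ≃g
      replacementProduct (cayleyGraph S) (cayleyGraph T) (orbitLabelling φ n) where
  toEquiv := equivProd
  map_rel_iff' := by
    intro p q
    rw [cayleyGraph_union_adj, cayleyGraph_image_inr_adj,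
      cayleyGraph_singleton_inl_adj hn hinj hS]
    rfl

end SemidirectProduct

open SemidirectProduct in
theorem cayleyGraph_semidirectProduct_replacementProduct_general
    {A B : Type*} [Group A] [Group B] [Fintype B]
    (SA : Set A) (SB : Set B) (φ : B →* MulAut A) (x : A)
    (hgenA : Subgroup.closure SA = ⊤) (hgenB : Subgroup.closure SB = ⊤)
    (hcard : SA.ncard = Fintype.card B) (hB2 : 2 ≤ Fintype.card B)
    (horb : SA = Set.range fun b : B => φ b x)
    (S : Set (A ⋊[φ] B))
    (hS : S = {p : A ⋊[φ] B | ∃ b ∈ SB, p = ⟨1, b⟩} ∪ {(⟨x, 1⟩ : A ⋊[φ] B)}) :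
    Subgroup.closure S = ⊤ ∧
    (SB = SB⁻¹ → x = x⁻¹ →
      S = S⁻¹ ∧
      ∃ ℓ : A → B → A, IsRPLabelling (cayleyGraph SA) ℓ ∧
        Nonempty (cayleyGraph S ≃g
          replacementProduct (cayleyGraph SA) (cayleyGraph SB) ℓ)) := by
  have hS' : S = inr '' SB ∪ {inl x} := by
    rw [hS, mk_eq_inl_mul_inr, map_one, mul_one]
    congr 1
    ext p
    simp [eq_comm, mk_eq_inl_mul_inr]
  have hinj : Function.Injective fun b => φ b x :=
    Function.injective_of_ncard_range_eq_card (horb ▸ hcard)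
  have hxSA (b : B) : φ b x ∈ SA := horb ▸ ⟨b, rfl⟩
  subst hS'
  refine ⟨closure_image_inr_union_inl_eq_top hgenB (horb ▸ hgenA), fun hSB hxx => ?_⟩
  have hx1 : x ≠ 1 := by
    rintro rfl
    obtain ⟨b, b', hne⟩ := Fintype.exists_pair_of_one_lt_card hB2
    exact hne (hinj (by simp))
  refine ⟨?_, orbitLabelling φ x, isRPLabelling_orbitLabelling hinj hx1 hxSA,
    ⟨cayleyGraphIsoReplacementProduct hxx.symm hinj hxSA⟩⟩
  rw [Set.union_inv, ← Set.image_inv, Set.inv_singleton, ← map_inv, ← hSB, ← hxx]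

/-- Theorem 5.4. Let `A` and `B` be finite groups with generating sets
`SA` and `SB`, with `|SA| = |B| ≥ 2`, let `φ` be an action of `B` on `A` such that `SA`
is the orbit of some `x ∈ SA`, and let `S = {(1, b) : b ∈ SB} ∪ {(x, 1)} ⊆ A ⋊[φ] B`.
Then `S` generates `A ⋊[φ] B`; moreover, if `SB = SB⁻¹` and `x = x⁻¹`, then `S = S⁻¹`
and the Cayley graph of `A ⋊[φ] B` with connection set `S` is a replacement product of
the Cayley graphs `C_A(SA)` and `C_B(SB)`. -/
theorem cayleyGraph_semidirectProduct_replacementProduct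
    {A B : Type*} [Group A] [Group B] [Fintype A] [Fintype B]
    (SA : Set A) (SB : Set B) (φ : B →* MulAut A) (x : A)
    (hgenA : Subgroup.closure SA = ⊤) (hgenB : Subgroup.closure SB = ⊤)
    (hcard : SA.ncard = Fintype.card B) (hB2 : 2 ≤ Fintype.card B)
    (hx : x ∈ SA) (horb : SA = Set.range fun b : B => φ b x)
    (S : Set (A ⋊[φ] B))
    (hS : S = {p : A ⋊[φ] B | ∃ b ∈ SB, p = ⟨1, b⟩} ∪ {(⟨x, 1⟩ : A ⋊[φ] B)}) :
    Subgroup.closure S = ⊤ ∧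
    (SB = SB⁻¹ → x = x⁻¹ →
      S = S⁻¹ ∧
      ∃ ℓ : A → B → A, IsRPLabelling (cayleyGraph SA) ℓ ∧
        Nonempty (cayleyGraph S ≃g
          replacementProduct (cayleyGraph SA) (cayleyGraph SB) ℓ)) :=
  cayleyGraph_semidirectProduct_replacementProduct_general SA SB φ x hgenA hgenB hcard hB2 horb S hS
end
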